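/- arXiv:0711.2810 — 2 statements merged into one kernel-verified Lean document; each statement's English description precedes it below -/
import Mathlib

section
/- Let Q be the quiver with one vertex e and one loop a, over a field k of characteristic zero. For all odd integers n, m ≥ 1 one has [(a^n,a),(a^m,a)]_Q = (n−m)·(a^{n+m−1},a). Consequently the k-span of {(a^n,a) : n ≥ 1 odd} is a Lie subalgebra of (C(Q), [·,·]_Q), and the elements l_i := (1/2)(a^{2i+1},a) (i ≥ 0) satisfy the Witt algebra relations [l_i,l_j]_Q = (i−j)·l_{i+j}. -/
/-! For odd `n` and `m` the exponents `(i-1)(m-1)`, `(i-1)(n-1)` and `(n-1)(m-1)` are all even,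
so every sign in the bracket of `(a^n, a)` and `(a^m, a)` is `+1` and the two sums contribute `n`
and `m` copies of `(a^{n+m-1}, a)`. As the bracket is bilinear, closure of the span reduces to
these generators, and `n + m - 1` is again odd. The Witt relations are the case `n = 2i+1`,
`m = 2j+1` rescaled by `1/4`. -/

/-! One-loop quiver base: one vertex `e` and one loop `a`.

For each `n ≥ 1` the set of paths of length `n` is `{a^n}`, and
`Q_n ∥ (Q_0 ∪ Q_1) = {(a^n, e), (a^n, a)}`.  The graded vector space
`C(Q) = ⊕_{n ≥ 1} k(Q_n ∥ Q_0 ∪ Q_1)` therefore has basis indexed by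
`{n : ℕ // 1 ≤ n} × Bool`, where `(n, false) ↔ (a^n, e)` and `(n, true) ↔ (a^n, a)`. -/

namespace OneLoop

/-- Degrees `n ≥ 1` indexing the components of `C(Q)`. -/
abbrev Idx : Type := {n : ℕ // 1 ≤ n}

variable (k : Type) [Field k]

/-- `C(Q) = ⊕_{n ≥ 1} k(Q_n ∥ Q_0 ∪ Q_1)` for the one-loop quiver:
basis `(n, false) ↔ (a^n, e)`, `(n, true) ↔ (a^n, a)`. -/
abbrev CL : Type := (Idx × Bool) →₀ k

/-- The bracket `[·,·]_Q` on basis elements.  For the one-loop quiver every arrow of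
every path equals `a`, so `(a^n, x) ∘_i (a^m, y) = δ_{a,y} (a^{n+m-1}, x)`, and the
general formula
`[(α,x),(β,y)]_Q = Σ_{i=1}^{n} (−1)^{(i−1)(m−1)} (α,x)∘_i(β,y)
  − (−1)^{(n−1)(m−1)} Σ_{i=1}^{m} (−1)^{(i−1)(n−1)} (β,y)∘_i(α,x)`
becomes the expression below (`true` encodes the arrow `a`, `false` the vertex `e`). -/
noncomputable def brB : Idx × Bool → Idx × Bool → CL k
  | ⟨⟨n, hn⟩, x⟩, ⟨⟨m, hm⟩, y⟩ =>
    (∑ i ∈ Finset.range n, ((-1 : k) ^ (i * (m - 1)))) •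
        (if y then Finsupp.single (⟨n + m - 1, by omega⟩, x) (1 : k) else 0)
      - ((-1 : k) ^ ((n - 1) * (m - 1))) •
          ((∑ i ∈ Finset.range m, ((-1 : k) ^ (i * (n - 1)))) •
            (if x then Finsupp.single (⟨n + m - 1, by omega⟩, y) (1 : k) else 0))

/-- The bracket `[·,·]_Q` on `C(Q)`: the bilinear extension of `brB`. -/
noncomputable def br (f g : CL k) : CL k :=
  f.sum fun P cP => g.sum fun R cR => (cP * cR) • brB k P R

/-- The basis element `(a^n, a)` (for `hn : 1 ≤ n`). -/
noncomputable def pa (n : ℕ) (hn : 1 ≤ n) : CL k := Finsupp.single (⟨n, hn⟩, true) (1 : k)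

/-- The basis element `(a^n, e)` (for `hn : 1 ≤ n`). -/
noncomputable def pe (n : ℕ) (hn : 1 ≤ n) : CL k := Finsupp.single (⟨n, hn⟩, false) (1 : k)


/-- The set `{(a^n, a) : n ≥ 1 odd}` inside `C(Q)`. -/
def oddSet : Set (CL k) := {w | ∃ (n : ℕ) (hn : 1 ≤ n), Odd n ∧ w = pa k n hn}

/-- `l_i := (1/2)·(a^{2i+1}, a)`. -/
noncomputable def ell (i : ℕ) : CL k := (2 : k)⁻¹ • pa k (2 * i + 1) (by omega)

noncomputable def brₗ : CL k →ₗ[k] CL k →ₗ[k] CL k :=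
  Finsupp.linearCombination k fun P => Finsupp.linearCombination k (brB k P)

theorem brₗ_apply (f g : CL k) : brₗ k f g = br k f g := by
  simp only [brₗ, br, Finsupp.linearCombination_apply, Finsupp.sum, LinearMap.sum_apply,
    LinearMap.smul_apply, Finset.smul_sum, mul_smul]

theorem br_single (P R : Idx × Bool) (c d : k) :
    br k (Finsupp.single P c) (Finsupp.single R d) = (c * d) • brB k P R := by
  simp [← brₗ_apply, brₗ, mul_smul]

theorem br_pa_pa_of_odd {n m : ℕ} (hn : 1 ≤ n) (hm : 1 ≤ m) (hon : Odd n) (hom : Odd m) :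
    br k (pa k n hn) (pa k m hm) =
      ((n : k) - (m : k)) • pa k (n + m - 1) (Nat.le_sub_of_add_le (Nat.add_le_add hn hm)) := by
  have hsign : ∀ {i l : ℕ}, Odd l → (-1 : k) ^ (i * (l - 1)) = 1 := fun hl =>
    ((Nat.Odd.sub_odd hl odd_one).mul_left _).neg_one_pow
  rw [pa, pa, br_single, one_mul, one_smul, brB]
  simp only [hsign hom, hsign hon, Finset.sum_const, Finset.card_range, nsmul_eq_mul, mul_one,
    one_smul, if_true, ← sub_smul]
  rfl

theorem br_mem_span_oddSet {f g : CL k} (hf : f ∈ Submodule.span k (oddSet k))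
    (hg : g ∈ Submodule.span k (oddSet k)) : br k f g ∈ Submodule.span k (oddSet k) := by
  rw [← brₗ_apply]
  refine Submodule.map₂_le.mp ?_ _ hf _ hg
  rw [Submodule.map₂_span_span, Submodule.span_le]
  rintro _ ⟨_, ⟨n, hn, hon, rfl⟩, _, ⟨m, hm, hom, rfl⟩, rfl⟩
  dsimp only
  rw [brₗ_apply, br_pa_pa_of_odd k hn hm hon hom]
  refine Submodule.smul_mem _ _ (Submodule.subset_span ⟨_, _, ?_, rfl⟩)
  obtain ⟨p, rfl⟩ := hon
  obtain ⟨q, rfl⟩ := hom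
  exact ⟨p + q, by omega⟩

theorem br_ell_ell (i j : ℕ) :
    br k (ell k i) (ell k j) = ((i : k) - (j : k)) • ell k (i + j) := by
  have hpa : pa k (2 * i + 1 + (2 * j + 1) - 1) (by omega) = pa k (2 * (i + j) + 1) (by omega) := by
    congr 1; omega
  have hcoeff : (2 : k)⁻¹ * (2 : k)⁻¹ * (((2 * i + 1 : ℕ) : k) - ((2 * j + 1 : ℕ) : k))
      = ((i : k) - (j : k)) * (2 : k)⁻¹ := by
    have h : (2 : k)⁻¹ * 2⁻¹ * 2 = 2⁻¹ := by simpa using mul_self_mul_inv (2⁻¹ : k)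
    push_cast
    linear_combination ((i : k) - j) * h
  simp only [ell, ← brₗ_apply, map_smul, LinearMap.smul_apply]
  rw [brₗ_apply, br_pa_pa_of_odd k _ _ (odd_two_mul_add_one i) (odd_two_mul_add_one j), hpa,
    smul_smul, smul_smul, hcoeff, ← smul_smul]

/-- STATEMENT 3: for the one-loop quiver over a field `k` of characteristic zero:
for all odd `n, m ≥ 1`, `[(a^n,a),(a^m,a)]_Q = (n−m)·(a^{n+m−1},a)`; consequently the
`k`-span of `{(a^n,a) : n ≥ 1 odd}` is a Lie subalgebra of `(C(Q), [·,·]_Q)` (it is a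
subspace closed under the bracket), and the elements `l_i := (1/2)·(a^{2i+1},a)`
satisfy the Witt algebra relations `[l_i, l_j]_Q = (i−j)·l_{i+j}`. -/
theorem stmt3 (k : Type) [Field k] :
    (∀ (n m : ℕ) (hn : 1 ≤ n) (hm : 1 ≤ m), Odd n → Odd m →
      br k (pa k n hn) (pa k m hm)
        = ((n : k) - (m : k)) • pa k (n + m - 1) (by omega)) ∧
    (∀ f g : CL k, f ∈ Submodule.span k (oddSet k) → g ∈ Submodule.span k (oddSet k) →
      br k f g ∈ Submodule.span k (oddSet k)) ∧
    (∀ i j : ℕ, br k (ell k i) (ell k j) = ((i : k) - (j : k)) • ell k (i + j)) :=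
  ⟨fun _ _ hn hm => br_pa_pa_of_odd k hn hm, fun _ _ => br_mem_span_oddSet k, br_ell_ell k⟩

end OneLoop
end

section
/- For every even integer n ≥ 2, q(n, h(n)) = q(n+1, h(n+1)). -/
/-- The binomial coefficient `C(m,j)` for `j : ℤ`, with `C(m,j) = 0` for `j < 0`. -/
def Cz (m : ℕ) (j : ℤ) : ℤ := if j < 0 then 0 else (m.choose j.toNat : ℤ)

/-- `q(n,l) := C(n+1,l) − C(n+1,l−1) − (C(n−1,l−1) − C(n−1,l−2))`. -/
def qcoef (n l : ℕ) : ℤ :=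
  Cz (n + 1) l - Cz (n + 1) ((l : ℤ) - 1) - (Cz (n - 1) ((l : ℤ) - 1) - Cz (n - 1) ((l : ℤ) - 2))

/-- `h(n) := ⌊(n+1)/2⌋`. -/
def hb (n : ℕ) : ℕ := (n + 1) / 2

/-- STATEMENT 13: for every even integer `n ≥ 2`, `q(n, h(n)) = q(n+1, h(n+1))`. -/
theorem stmt13 (n : ℕ) (hn : 2 ≤ n) (he : Even n) :
    qcoef n (hb n) = qcoef (n + 1) (hb (n + 1)) := by
  obtain ⟨m, rfl⟩ := he
  have hm : 1 ≤ m := by omega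
  rcases Nat.lt_or_ge m 2 with h | h
  · have : m = 1 := by omega
    subst this
    decide
  · obtain ⟨a, rfl⟩ : ∃ a, m = a + 2 := ⟨m - 2, by omega⟩
    have h1 : hb ((a + 2) + (a + 2)) = a + 2 := by simp [hb]; omega
    have h2 : hb ((a + 2) + (a + 2) + 1) = a + 3 := by simp [hb]; omega
    rw [h1, h2]
    simp only [qcoef, Cz]
    have e1 : ((a : ℤ) + 2) - 1 = ((a + 1 : ℕ) : ℤ) := by push_cast; ring
    have e2 : ((a : ℤ) + 2) - 2 = ((a : ℕ) : ℤ) := by push_cast; ring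
    have e3 : ((a : ℤ) + 3) - 1 = ((a + 2 : ℕ) : ℤ) := by push_cast; ring
    have e4 : ((a : ℤ) + 3) - 2 = ((a + 1 : ℕ) : ℤ) := by push_cast; ring
    push_cast
    rw [e1, e2, e3, e4]
    have t1 : ((a:ℤ)+2).toNat = a+2 := by omega
    have t2 : ((a:ℤ)+3).toNat = a+3 := by omega
    rw [t1, t2]
    rw [if_neg (by omega : ¬ ((a:ℤ)+2 < 0)), if_neg (by omega : ¬ ((a:ℤ)+3 < 0))]
    simp only [if_neg (by omega : ¬ (((a+1:ℕ):ℤ) < 0)), if_neg (by omega : ¬ (((a+2:ℕ):ℤ) < 0)),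
      if_neg (by omega : ¬ (((a:ℕ):ℤ) < 0))]
    norm_num
    rw [t1]
    rw [show a + 2 + (a + 2) + 1 + 1 = 2 * a + 6 by omega,
      show a + 2 + (a + 2) + 1 = 2 * a + 5 by omega,
      show a + 2 + (a + 1) = 2 * a + 3 by omega,
      show a + 2 + (a + 2) = 2 * a + 4 by omega]
    have p1 : (2 * a + 6).choose (a + 3) = (2 * a + 5).choose (a + 2) + (2 * a + 5).choose (a + 3) := by
      rw [show 2*a+6 = (2*a+5)+1 by ring, show a+3 = (a+2)+1 by ring, Nat.choose_succ_succ]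
    have p2 : (2 * a + 6).choose (a + 2) = (2 * a + 5).choose (a + 1) + (2 * a + 5).choose (a + 2) := by
      rw [show 2*a+6 = (2*a+5)+1 by ring, show a+2 = (a+1)+1 by ring, Nat.choose_succ_succ]
    have p3 : (2 * a + 4).choose (a + 2) = (2 * a + 3).choose (a + 1) + (2 * a + 3).choose (a + 2) := by
      rw [show 2*a+4 = (2*a+3)+1 by ring, show a+2 = (a+1)+1 by ring, Nat.choose_succ_succ]
    have p4 : (2 * a + 4).choose (a + 1) = (2 * a + 3).choose a + (2 * a + 3).choose (a + 1) := by
      rw [show 2*a+4 = (2*a+3)+1 by ring, show a+1 = a+1 by ring, Nat.choose_succ_succ]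
    have s1 : (2 * a + 5).choose (a + 3) = (2 * a + 5).choose (a + 2) := by
      have := Nat.choose_symm_half (a + 2)
      simpa [show 2*(a+2)+1 = 2*a+5 by ring] using this
    have s2 : (2 * a + 3).choose (a + 2) = (2 * a + 3).choose (a + 1) := by
      have := Nat.choose_symm_half (a + 1)
      simpa [show 2*(a+1)+1 = 2*a+3 by ring] using this
    zify at p1 p2 p3 p4 s1 s2 ⊢
    linarith
end
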